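/- arXiv:2203.11786 — 6 statements merged into one kernel-verified Lean document; each statement's English description precedes it below -/
import Mathlib

section
/- Let ε > 0 and let {a_n} be an increasing sequence of real numbers satisfying a_n > n^(1+ε) for all n ∈ ℕ. Then for every N ∈ ℕ, the tail sum ∑_{n=N}^∞ 1/a_n is less than (2 + 1/ε) / a_N^(ε/(1+ε)). -/
/-!
Put `T = a_N ^ (1/(1+ε))` and split the tail at an index `N + K` with `K ≤ T < N + K`.
The first `K` terms are each at most `1/a_N`, contributing at most `T / a_N = T^(-ε)`.
Beyond `N + K` we use `1/a_n < n^(-(1+ε))`, and the integral test bounds that tail of the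
`p`-series by `(1 + 1/ε) (N + K)^(-ε) ≤ (1 + 1/ε) T^(-ε)`.
-/

open Real Finset MeasureTheory Set

lemma tsum_rpow_neg_nat_add_add_one_le {s : ℝ} (hs : 1 < s) {M : ℕ} (hM : 0 < M) :
    ∑' n : ℕ, ((n + M + 1 : ℕ) : ℝ) ^ (-s) ≤ (M : ℝ) ^ (1 - s) / (s - 1) := by
  have hM' : (0 : ℝ) < M := by exact_mod_cast hM
  have hanti : AntitoneOn (fun x : ℝ => x ^ (-s)) (Ici (M : ℝ)) :=
    (antitoneOn_rpow_Ioi_of_exponent_nonpos (by linarith)).mono fun x hx => hM'.trans_le hx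
  calc ∑' n : ℕ, ((n + M + 1 : ℕ) : ℝ) ^ (-s)
      ≤ ∫ x in Ioi (M : ℝ), x ^ (-s) :=
        hanti.tsum_comp_add_le_integral M (integrableOn_Ioi_rpow_of_lt (by linarith) hM')
          fun x hx => rpow_nonneg (hM'.trans hx).le _
    _ = (M : ℝ) ^ (1 - s) / (s - 1) := by
        rw [integral_Ioi_rpow_of_lt (by linarith) hM', ← neg_div_neg_eq, neg_neg]
        ring_nf

lemma summable_rpow_neg_nat_add {s : ℝ} (hs : 1 < s) (M : ℕ) :
    Summable fun n : ℕ => ((n + M : ℕ) : ℝ) ^ (-s) :=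
  (summable_nat_add_iff M).2 (summable_nat_rpow.2 (by linarith))

lemma tsum_rpow_neg_nat_add_le {s : ℝ} (hs : 1 < s) {M : ℕ} (hM : 0 < M) :
    ∑' n : ℕ, ((n + M : ℕ) : ℝ) ^ (-s) ≤ s / (s - 1) * (M : ℝ) ^ (1 - s) := by
  have hM1 : (1 : ℝ) ≤ M := by exact_mod_cast hM
  have hhead : (M : ℝ) ^ (-s) ≤ (M : ℝ) ^ (1 - s) := rpow_le_rpow_of_exponent_le hM1 (by linarith)
  have htail := tsum_rpow_neg_nat_add_add_one_le hs hM
  rw [(summable_rpow_neg_nat_add hs M).tsum_eq_zero_add]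
  simp only [zero_add, Nat.add_right_comm _ 1 M]
  have hs1 : 0 < s - 1 := by linarith
  calc (M : ℝ) ^ (-s) + ∑' n : ℕ, ((n + M + 1 : ℕ) : ℝ) ^ (-s)
      ≤ (M : ℝ) ^ (1 - s) + (M : ℝ) ^ (1 - s) / (s - 1) := add_le_add hhead htail
    _ = s / (s - 1) * (M : ℝ) ^ (1 - s) := by field_simp; ring

lemma tsum_lt_of_lt_rpow_neg_nat_add {s : ℝ} (hs : 1 < s) {M : ℕ} (hM : 0 < M) {f : ℕ → ℝ}
    (hf0 : ∀ n, 0 ≤ f n) (hf : ∀ n, f n < ((n + M : ℕ) : ℝ) ^ (-s)) :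
    ∑' n, f n < s / (s - 1) * (M : ℝ) ^ (1 - s) := by
  have hg := summable_rpow_neg_nat_add hs M
  calc ∑' n, f n < ∑' n : ℕ, ((n + M : ℕ) : ℝ) ^ (-s) :=
        Summable.tsum_lt_tsum (i := 0) (fun n => (hf n).le) (hf 0)
          (hg.of_nonneg_of_le hf0 fun n => (hf n).le) hg
    _ ≤ s / (s - 1) * (M : ℝ) ^ (1 - s) := tsum_rpow_neg_nat_add_le hs hM

lemma exists_nat_le_lt_add {T : ℝ} (hT : 0 ≤ T) {N : ℕ} (hN : 1 ≤ N) :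
    ∃ K : ℕ, (K : ℝ) ≤ T ∧ T < N + K := by
  refine ⟨⌊T⌋₊ + 1 - N, ?_, ?_⟩
  · exact le_trans (by exact_mod_cast (by omega : ⌊T⌋₊ + 1 - N ≤ ⌊T⌋₊)) (Nat.floor_le hT)
  · calc T < ⌊T⌋₊ + 1 := Nat.lt_floor_add_one T
      _ ≤ N + (⌊T⌋₊ + 1 - N : ℕ) := by
        exact_mod_cast (by omega : ⌊T⌋₊ + 1 ≤ N + (⌊T⌋₊ + 1 - N))

/-- Erdős-type tail estimate: if `a` is a strictly increasing sequence of reals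
with `a n > n ^ (1 + ε)` for all `n ≥ 1`, then for every `N ≥ 1` the tail
`∑_{n=N}^∞ 1/a n` is less than `(2 + 1/ε) / (a N) ^ (ε/(1+ε))`. -/
theorem stmt_0 (ε : ℝ) (hε : 0 < ε) (a : ℕ → ℝ)
    (hmono : StrictMono a)
    (hgrow : ∀ n : ℕ, 1 ≤ n → (n : ℝ) ^ (1 + ε) < a n) :
    ∀ N : ℕ, 1 ≤ N →
      ∑' n : ℕ, 1 / a (N + n) < (2 + 1 / ε) / (a N) ^ (ε / (1 + ε)) := by
  intro N hN
  have hpos : ∀ n, 1 ≤ n → 0 < a n := fun n hn =>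
    (rpow_pos_of_pos (by exact_mod_cast hn) _).trans (hgrow n hn)
  obtain ⟨T, hT, haN⟩ : ∃ T > 0, a N = T ^ (1 + ε) :=
    ⟨a N ^ (1 + ε)⁻¹, rpow_pos_of_pos (hpos N hN) _,
      (rpow_inv_rpow (hpos N hN).le (by positivity)).symm⟩
  obtain ⟨K, hKT, hTNK⟩ := exists_nat_le_lt_add hT.le hN
  have hhead : ∑ i ∈ range K, 1 / a (N + i) ≤ T ^ (-ε) := calc
    _ ≤ #(range K) • (1 / a N) := sum_le_card_nsmul _ _ _ fun i _ =>
          one_div_le_one_div_of_le (hpos N hN) (hmono.monotone (Nat.le_add_right N i))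
    _ ≤ T * (1 / a N) := by
          rw [card_range, nsmul_eq_mul]
          exact mul_le_mul_of_nonneg_right hKT (one_div_pos.2 (hpos N hN)).le
    _ = T ^ (-ε) := by
          rw [haN, rpow_add hT, rpow_one, rpow_neg hT.le]; field_simp
  have htail_nonneg : ∀ n, 0 ≤ 1 / a (N + (n + K)) := fun n =>
    one_div_nonneg.2 (hpos _ (by omega)).le
  have htail_lt : ∀ n, 1 / a (N + (n + K)) < ((n + (N + K) : ℕ) : ℝ) ^ (-(1 + ε)) := fun n => by
    have hn : (0 : ℝ) < ((n + (N + K) : ℕ) : ℝ) := by exact_mod_cast (by omega : 0 < n + (N + K))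
    rw [rpow_neg hn.le, ← one_div, show N + (n + K) = n + (N + K) by ring]
    exact one_div_lt_one_div_of_lt (rpow_pos_of_pos hn _) (hgrow _ (by omega))
  have htail : ∑' n, 1 / a (N + (n + K)) < (1 + 1 / ε) * T ^ (-ε) := calc
    _ < (1 + ε) / (1 + ε - 1) * ((N + K : ℕ) : ℝ) ^ (1 - (1 + ε)) :=
          tsum_lt_of_lt_rpow_neg_nat_add (by linarith) (by omega) htail_nonneg htail_lt
    _ = (1 + 1 / ε) * ((N : ℝ) + K) ^ (-ε) := by
          push_cast
          rw [add_sub_cancel_left, sub_add_cancel_left]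
          field_simp
          ring
    _ ≤ (1 + 1 / ε) * T ^ (-ε) :=
          mul_le_mul_of_nonneg_left (rpow_le_rpow_of_nonpos hT hTNK.le (neg_nonpos.2 hε.le))
            (by positivity)
  have hsum : Summable fun n => 1 / a (N + (n + K)) :=
    (summable_rpow_neg_nat_add (by linarith) (N + K)).of_nonneg_of_le htail_nonneg
      fun n => (htail_lt n).le
  have hpow : (2 + 1 / ε) / a N ^ (ε / (1 + ε)) = (2 + 1 / ε) * T ^ (-ε) := by
    rw [haN, ← rpow_mul hT.le, show (1 + ε) * (ε / (1 + ε)) = ε by field_simp, rpow_neg hT.le,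
      div_eq_mul_inv]
  rw [← Summable.sum_add_tsum_nat_add' (f := fun m => 1 / a (N + m)) hsum, hpow]
  linarith
end

section
/- Let D, K, N be natural numbers and {d_n} a sequence of natural numbers (all ≥ 1). Writing D_n = ∏_{i=1}^n d_i, one has D^(N+1) · ∏_{i=1}^N (K·D_i + d_i) ≥ K·D·D_N · ∑_{n=1}^N D^n · ∏_{i=1}^{n-1} (K·D_i + d_i). -/
open Finset

/-- Lemma on exponents: with `D_n = ∏_{i=1}^n d_i`,
`D^(N+1) ∏_{i=1}^N (K D_i + d_i) ≥ K D D_N ∑_{n=1}^N D^n ∏_{i=1}^{n-1} (K D_i + d_i)`. -/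
theorem stmt_1 (D K N : ℕ) (hD : 1 ≤ D) (hK : 1 ≤ K)
    (d : ℕ → ℕ) (hd : ∀ n, 1 ≤ d n)
    (Dn : ℕ → ℕ) (hDn : ∀ n, Dn n = ∏ i ∈ Icc 1 n, d i) :
    D ^ (N + 1) * ∏ i ∈ Icc 1 N, (K * Dn i + d i) ≥
      K * D * Dn N * ∑ n ∈ Icc 1 N, D ^ n * ∏ i ∈ Icc 1 (n - 1), (K * Dn i + d i) := by
  induction N with
  | zero => simp
  | succ N ih =>
    rw [Finset.prod_Icc_succ_top (Nat.le_add_left 1 N),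
        Finset.sum_Icc_succ_top (Nat.le_add_left 1 N)]
    have hDN1 : Dn (N + 1) = Dn N * d (N + 1) := by
      rw [hDn, hDn, Finset.prod_Icc_succ_top (Nat.le_add_left 1 N)]
    simp only [Nat.add_sub_cancel]
    set P := ∏ i ∈ Icc 1 N, (K * Dn i + d i) with hP
    set S := ∑ n ∈ Icc 1 N, D ^ n * ∏ i ∈ Icc 1 (n - 1), (K * Dn i + d i) with hS
    have key : K * D * Dn N * S ≤ D ^ (N + 1) * P := ih
    have h1 : K * D * Dn (N + 1) * (S + D ^ (N + 1) * P)
        = d (N + 1) * (K * D * Dn N * S) + K * D * Dn N * d (N + 1) * (D ^ (N + 1) * P) := by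
      rw [hDN1]; ring
    rw [ge_iff_le, h1]
    have h2 : d (N + 1) * (K * D * Dn N * S) ≤ d (N + 1) * D * (D ^ (N + 1) * P) := by
      calc d (N + 1) * (K * D * Dn N * S) ≤ d (N + 1) * (D ^ (N + 1) * P) :=
            Nat.mul_le_mul_left _ key
        _ ≤ d (N + 1) * D * (D ^ (N + 1) * P) := by
            rw [mul_assoc]
            exact Nat.mul_le_mul_left _ (Nat.le_mul_of_pos_left _ hD)
    calc d (N + 1) * (K * D * Dn N * S) + K * D * Dn N * d (N + 1) * (D ^ (N + 1) * P)
        ≤ d (N + 1) * D * (D ^ (N + 1) * P) + K * D * Dn N * d (N + 1) * (D ^ (N + 1) * P) :=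
          Nat.add_le_add_right h2 _
      _ = D ^ (N + 1 + 1) * (P * (K * Dn (N + 1) + d (N + 1))) := by rw [hDN1]; ring
end

section
/- Let α and β be algebraic numbers that are not conjugate over ℚ (in particular α ≠ β). Then |α − β| ≥ 1 / (2^(deg(α)·deg(β)) · M(α)^(deg(β)) · M(β)^(deg(α))), where M denotes the Mahler measure. -/
/-!
The resultant `R = Res(fα, fβ)` of the two integer minimal polynomials is an integer, and it is
nonzero because non-conjugate algebraic numbers have no common conjugate; hence `1 ≤ |R|`.
Over `ℂ`, `R = cα ^ dβ * cβ ^ dα * ∏ (αᵢ - βⱼ)` over all pairs of conjugates, where `cα`, `cβ` are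
the leading coefficients. Keep the factor `|α - β|` and bound every other factor by
`|αᵢ - βⱼ| ≤ 2 max(1, |αᵢ|) max(1, |βⱼ|)`; the product of these bounds over all pairs is
`2 ^ (dα dβ) M(α) ^ dβ M(β) ^ dα`.
-/

open Polynomial

theorem Multiset.prod_map_mul_product {α β M : Type*} [CommMonoid M] (s : Multiset α)
    (t : Multiset β) (f : α → M) (g : β → M) :
    ((s ×ˢ t).map fun p => f p.1 * g p.2).prod
      = (s.map f).prod ^ Multiset.card t * (t.map g).prod ^ Multiset.card s := by
  rw [Multiset.prod_map_product_eq_prod_prod]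
  simp only [Multiset.prod_map_mul, Multiset.map_const', Multiset.prod_replicate,
    Multiset.prod_map_pow]

theorem Multiset.prod_map_le_mul_prod_map_of_mem {ι R : Type*} [CommSemiring R] [PartialOrder R]
    [IsOrderedRing R] {s : Multiset ι} {f g : ι → R} (hf : ∀ i ∈ s, 0 ≤ f i)
    (hfg : ∀ i ∈ s, f i ≤ g i) (hg : ∀ i ∈ s, 1 ≤ g i) {x : ι} (hx : x ∈ s) :
    (s.map f).prod ≤ f x * (s.map g).prod := by
  classical
  rw [← Multiset.cons_erase hx, Multiset.map_cons, Multiset.map_cons, Multiset.prod_cons,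
    Multiset.prod_cons]
  have hs : ∀ i ∈ s.erase x, i ∈ s := fun i hi => Multiset.mem_of_mem_erase hi
  have hrest : ((s.erase x).map f).prod ≤ ((s.erase x).map g).prod :=
    Multiset.prod_map_le_prod_map₀ f g (fun i hi => hf i (hs i hi)) (fun i hi => hfg i (hs i hi))
  have hgrest : 0 ≤ ((s.erase x).map g).prod :=
    Multiset.prod_nonneg fun _ hy => by
      obtain ⟨i, hi, rfl⟩ := Multiset.mem_map.mp hy
      exact zero_le_one.trans (hg i (hs i hi))
  exact mul_le_mul_of_nonneg_left (hrest.trans (le_mul_of_one_le_left hgrest (hg x hx))) (hf x hx)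

theorem Multiset.norm_prod {α : Type*} [NormedField α] (s : Multiset α) :
    ‖s.prod‖ = (s.map (‖·‖)).prod :=
  map_multiset_prod normHom s

theorem norm_sub_le_two_mul_max_one_mul_max_one {E : Type*} [SeminormedAddCommGroup E]
    (a b : E) : ‖a - b‖ ≤ 2 * max 1 ‖a‖ * max 1 ‖b‖ := by
  have ha := le_max_left 1 ‖a‖
  have hb := le_max_left 1 ‖b‖
  calc ‖a - b‖ ≤ max 1 ‖a‖ + max 1 ‖b‖ :=
        (norm_sub_le a b).trans (add_le_add (le_max_right _ _) (le_max_right _ _))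
    _ ≤ 2 * max 1 ‖a‖ * max 1 ‖b‖ := by nlinarith

theorem minpoly.notMem_aroots_of_ne {K L : Type*} [Field K] [CommRing L] [IsDomain L]
    [Algebra K L] {α β : L} (hα : IsIntegral K α) (hβ : IsIntegral K β)
    (h : minpoly K α ≠ minpoly K β) {z : L} (hz : z ∈ (minpoly K α).aroots L) :
    z ∉ (minpoly K β).aroots L := fun hz' =>
  h <| ((isConjRoot_iff_mem_minpoly_aroots hα).mpr hz).trans
    ((isConjRoot_iff_mem_minpoly_aroots hβ).mpr hz').symm

namespace Polynomial

theorem aroots_eq_of_map_eq_smul {S : Type*} [CommRing S] [IsDomain S] [Algebra ℚ S]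
    {f : ℤ[X]} {p : ℚ[X]} {c : ℚ} (hc : c ≠ 0) (h : f.map (Int.castRingHom ℚ) = c • p) :
    f.aroots S = p.aroots S := by
  rw [← aroots_map S ℚ f, algebraMap_int_eq, h, aroots_smul_nonzero p hc]

theorem mahlerMeasure_map_int (f : ℤ[X]) :
    (f.map (algebraMap ℤ ℂ)).mahlerMeasure =
      |(f.leadingCoeff : ℝ)| * ((f.aroots ℂ).map fun z => max 1 ‖z‖).prod := by
  rw [mahlerMeasure_eq_leadingCoeff_mul_prod_roots,
    leadingCoeff_map_of_injective (RingHom.injective_int _), eq_intCast, Complex.norm_intCast,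
    aroots_def]

theorem resultant_map_of_injective {R S : Type*} [CommRing R] [CommRing S]
    {φ : R →+* S} (hφ : Function.Injective φ) (f g : R[X]) :
    resultant (f.map φ) (g.map φ) = φ (resultant f g) := by
  rw [← resultant_map_map, natDegree_map_eq_of_injective hφ, natDegree_map_eq_of_injective hφ]

theorem resultant_eq_leadingCoeff_mul_prod_roots_sub {K : Type*} [Field K]
    {f g : K[X]} (hf : f.Splits) (hg : g.Splits) :
    resultant f g = f.leadingCoeff ^ g.natDegree * g.leadingCoeff ^ f.natDegree *
      ((f.roots ×ˢ g.roots).map fun p => p.1 - p.2).prod := by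
  rw [resultant_eq_prod_eval f g _ le_rfl hf, Multiset.prod_map_product_eq_prod_prod]
  simp only [hg.eval_eq_prod_roots, Multiset.prod_map_mul, Multiset.map_const',
    Multiset.prod_replicate, hf.natDegree_eq_card_roots]
  ring

theorem resultant_ne_zero_of_splits {K : Type*} [Field K] {f g : K[X]}
    (hf : f.Splits) (hg : g.Splits) (hf0 : f ≠ 0) (hg0 : g ≠ 0)
    (hfg : ∀ a ∈ f.roots, a ∉ g.roots) : resultant f g ≠ 0 := by
  rw [resultant_eq_leadingCoeff_mul_prod_roots_sub hf hg]
  refine mul_ne_zero (by simp [hf0, hg0]) (Multiset.prod_ne_zero fun h0 => ?_)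
  obtain ⟨⟨a, b⟩, hab, hzero⟩ := Multiset.mem_map.mp h0
  obtain ⟨ha, hb⟩ := Multiset.mem_product.mp hab
  rw [sub_eq_zero.mp hzero] at ha
  exact hfg b ha hb

theorem one_le_norm_resultant_map_int {f g : ℤ[X]} (hf0 : f.map (algebraMap ℤ ℂ) ≠ 0)
    (hg0 : g.map (algebraMap ℤ ℂ) ≠ 0)
    (hfg : ∀ z ∈ (f.map (algebraMap ℤ ℂ)).roots, z ∉ (g.map (algebraMap ℤ ℂ)).roots) :
    1 ≤ ‖resultant (f.map (algebraMap ℤ ℂ)) (g.map (algebraMap ℤ ℂ))‖ := by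
  have hres : resultant (f.map (algebraMap ℤ ℂ)) (g.map (algebraMap ℤ ℂ)) =
      ((resultant f g : ℤ) : ℂ) := by
    rw [resultant_map_of_injective (RingHom.injective_int _), eq_intCast]
  have hres_ne : resultant f g ≠ 0 := fun h0 =>
    resultant_ne_zero_of_splits (IsAlgClosed.splits _) (IsAlgClosed.splits _) hf0 hg0 hfg
      (by rw [hres, h0, Int.cast_zero])
  rw [hres, Complex.norm_intCast]
  exact_mod_cast Int.one_le_abs hres_ne

theorem norm_resultant_le_norm_sub_mul_mahlerMeasure {F G : ℂ[X]} {α β : ℂ}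
    (hα : α ∈ F.roots) (hβ : β ∈ G.roots) :
    ‖resultant F G‖ ≤ ‖α - β‖ * (2 ^ (F.natDegree * G.natDegree) *
      F.mahlerMeasure ^ G.natDegree * G.mahlerMeasure ^ F.natDegree) := by
  set m : ℂ → ℝ := fun z => max 1 ‖z‖
  have hm : ∀ z, 1 ≤ m z := fun z => le_max_left _ _
  have hpairs : ((F.roots ×ˢ G.roots).map fun p => ‖p.1 - p.2‖).prod ≤
      ‖α - β‖ * ((F.roots ×ˢ G.roots).map fun p => 2 * m p.1 * m p.2).prod :=
    Multiset.prod_map_le_mul_prod_map_of_mem (f := fun p => ‖p.1 - p.2‖)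
      (g := fun p => 2 * m p.1 * m p.2) (x := (α, β)) (fun _ _ => norm_nonneg _)
      (fun p _ => norm_sub_le_two_mul_max_one_mul_max_one p.1 p.2)
      (fun p _ => by nlinarith [hm p.1, hm p.2])
      (Multiset.mem_product.mpr ⟨hα, hβ⟩)
  have hsplit : ((F.roots ×ˢ G.roots).map fun p => 2 * m p.1 * m p.2).prod =
      2 ^ (F.natDegree * G.natDegree) * (F.roots.map m).prod ^ G.natDegree *
        (G.roots.map m).prod ^ F.natDegree := by
    rw [Multiset.prod_map_mul_product F.roots G.roots (fun a => 2 * m a) m,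
      Multiset.prod_map_mul, Multiset.map_const', Multiset.prod_replicate,
      (IsAlgClosed.splits F).natDegree_eq_card_roots,
      (IsAlgClosed.splits G).natDegree_eq_card_roots]
    ring
  rw [resultant_eq_leadingCoeff_mul_prod_roots_sub (IsAlgClosed.splits F) (IsAlgClosed.splits G),
    mahlerMeasure_eq_leadingCoeff_mul_prod_roots, mahlerMeasure_eq_leadingCoeff_mul_prod_roots,
    norm_mul, norm_mul, norm_pow, norm_pow, Multiset.norm_prod, Multiset.map_map]
  calc ‖F.leadingCoeff‖ ^ G.natDegree * ‖G.leadingCoeff‖ ^ F.natDegree *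
        ((F.roots ×ˢ G.roots).map fun p => ‖p.1 - p.2‖).prod
      ≤ ‖F.leadingCoeff‖ ^ G.natDegree * ‖G.leadingCoeff‖ ^ F.natDegree *
        (‖α - β‖ * ((F.roots ×ˢ G.roots).map fun p => 2 * m p.1 * m p.2).prod) := by
        gcongr
    _ = _ := by rw [hsplit]; ring

end Polynomial

theorem stmt_9_general (α β : ℂ) (hα : IsAlgebraic ℚ α) (hβ : IsAlgebraic ℚ β)
    (hnc : minpoly ℚ α ≠ minpoly ℚ β)
    (fα fβ : Polynomial ℤ)
    (hfαlead : 0 < fα.leadingCoeff)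
    (hfα : fα.map (Int.castRingHom ℚ) = (fα.leadingCoeff : ℚ) • minpoly ℚ α)
    (hfβlead : 0 < fβ.leadingCoeff)
    (hfβ : fβ.map (Int.castRingHom ℚ) = (fβ.leadingCoeff : ℚ) • minpoly ℚ β)
    (Mα Mβ : ℝ)
    (hMα : Mα = |(fα.leadingCoeff : ℝ)| * ((fα.aroots ℂ).map (fun z => max 1 (‖z‖))).prod)
    (hMβ : Mβ = |(fβ.leadingCoeff : ℝ)| * ((fβ.aroots ℂ).map (fun z => max 1 (‖z‖))).prod)
    (dα dβ : ℕ) (hdα : dα = (minpoly ℚ α).natDegree) (hdβ : dβ = (minpoly ℚ β).natDegree) :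
    ‖α - β‖ ≥ 1 / (2 ^ (dα * dβ) * Mα ^ dβ * Mβ ^ dα) := by
  have hαi := hα.isIntegral
  have hβi := hβ.isIntegral
  set Fα := fα.map (algebraMap ℤ ℂ)
  set Fβ := fβ.map (algebraMap ℤ ℂ)
  have hrootsα : Fα.roots = (minpoly ℚ α).aroots ℂ :=
    aroots_eq_of_map_eq_smul (by exact_mod_cast hfαlead.ne') hfα
  have hrootsβ : Fβ.roots = (minpoly ℚ β).aroots ℂ :=
    aroots_eq_of_map_eq_smul (by exact_mod_cast hfβlead.ne') hfβ
  have hdegα : Fα.natDegree = dα := by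
    rw [(IsAlgClosed.splits Fα).natDegree_eq_card_roots, hrootsα,
      IsAlgClosed.card_aroots_eq_natDegree, hdα]
  have hdegβ : Fβ.natDegree = dβ := by
    rw [(IsAlgClosed.splits Fβ).natDegree_eq_card_roots, hrootsβ,
      IsAlgClosed.card_aroots_eq_natDegree, hdβ]
  have hmemα : α ∈ Fα.roots := hrootsα ▸ (isConjRoot_iff_mem_minpoly_aroots hαi).mp .refl
  have hmemβ : β ∈ Fβ.roots := hrootsβ ▸ (isConjRoot_iff_mem_minpoly_aroots hβi).mp .refl
  have hres_one : 1 ≤ ‖resultant Fα Fβ‖ :=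
    one_le_norm_resultant_map_int (ne_zero_of_mem_roots hmemα) (ne_zero_of_mem_roots hmemβ)
      fun z hz => hrootsβ ▸ minpoly.notMem_aroots_of_ne hαi hβi hnc (hrootsα ▸ hz)
  rw [hMα, hMβ, ← mahlerMeasure_map_int, ← mahlerMeasure_map_int, ← hdegα, ← hdegβ]
  have := Fα.mahlerMeasure_nonneg
  have := Fβ.mahlerMeasure_nonneg
  exact div_le_of_le_mul₀ (by positivity) (norm_nonneg _)
    (hres_one.trans (norm_resultant_le_norm_sub_mul_mahlerMeasure hmemα hmemβ))

/-- Liouville-type separation: if `α` and `β` are non-conjugate algebraic numbers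
(distinct minimal polynomials over `ℚ`), then
`|α - β| ≥ 1 / (2 ^ (deg α * deg β) * M(α) ^ deg β * M(β) ^ deg α)`,
where `M(γ)` is the Mahler measure of `γ`, computed from the primitive integer
minimal polynomial of `γ` (with positive leading coefficient): the absolute value of
its leading coefficient times the product of `max 1 |γ_i|` over its complex roots. -/
theorem stmt_9 (α β : ℂ) (hα : IsAlgebraic ℚ α) (hβ : IsAlgebraic ℚ β)
    (hnc : minpoly ℚ α ≠ minpoly ℚ β)
    (fα fβ : Polynomial ℤ)
    (hfαprim : fα.IsPrimitive) (hfαlead : 0 < fα.leadingCoeff)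
    (hfα : fα.map (Int.castRingHom ℚ) = (fα.leadingCoeff : ℚ) • minpoly ℚ α)
    (hfβprim : fβ.IsPrimitive) (hfβlead : 0 < fβ.leadingCoeff)
    (hfβ : fβ.map (Int.castRingHom ℚ) = (fβ.leadingCoeff : ℚ) • minpoly ℚ β)
    (Mα Mβ : ℝ)
    (hMα : Mα = |(fα.leadingCoeff : ℝ)| * ((fα.aroots ℂ).map (fun z => max 1 (‖z‖))).prod)
    (hMβ : Mβ = |(fβ.leadingCoeff : ℝ)| * ((fβ.aroots ℂ).map (fun z => max 1 (‖z‖))).prod)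
    (dα dβ : ℕ) (hdα : dα = (minpoly ℚ α).natDegree) (hdβ : dβ = (minpoly ℚ β).natDegree) :
    ‖α - β‖ ≥ 1 / (2 ^ (dα * dβ) * Mα ^ dβ * Mβ ^ dα) :=
  stmt_9_general α β hα hβ hnc fα fβ hfαlead hfα hfβlead hfβ Mα Mβ hMα hMβ dα dβ hdα hdβ
end

section
/- Let {a_n} be a sequence of integers with a_1 ≥ 2 and a_{n+1} = a_n² − a_n + 1 for all n. Then the limit lim_{n→∞} a_n^(1/2^n) exists, is finite, and satisfies 1 < (a_1² − a_1)^(1/4) ≤ lim_{n→∞} a_n^(1/2^n) < ∞. -/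
open Filter

/-- For an integer sequence with `a 1 ≥ 2` and `a (n+1) = a n ^ 2 - a n + 1`,
the limit `L = lim_{n→∞} (a n) ^ (1 / 2^n)` exists (is finite) and satisfies
`1 < (a 1 ^ 2 - a 1) ^ (1/4) ≤ L`. -/
theorem stmt_11 (a : ℕ → ℤ) (h1 : 2 ≤ a 1)
    (hrec : ∀ n : ℕ, 1 ≤ n → a (n + 1) = a n ^ 2 - a n + 1) :
    ∃ L : ℝ,
      Tendsto (fun n : ℕ => (a n : ℝ) ^ ((1 : ℝ) / 2 ^ n)) atTop (nhds L) ∧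
      1 < ((a 1 : ℝ) ^ 2 - a 1) ^ ((1 : ℝ) / 4) ∧
      ((a 1 : ℝ) ^ 2 - a 1) ^ ((1 : ℝ) / 4) ≤ L := by
  have ha : ∀ n : ℕ, 1 ≤ n → 2 ≤ a n := by
    intro n hn
    induction n with
    | zero => omega
    | succ k ih =>
      rcases Nat.eq_zero_or_pos k with hk | hk
      · subst hk; exact h1
      · have h2 := ih hk
        rw [hrec k hk]
        nlinarith
  have haR : ∀ n : ℕ, 1 ≤ n → (2 : ℝ) ≤ (a n : ℝ) := by
    intro n hn; exact_mod_cast ha n hn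
  set f : ℕ → ℝ := fun n => Real.log (a n) / 2 ^ n with hfdef
  set g : ℕ → ℝ := fun n => Real.log ((a n : ℝ) - 1) / 2 ^ n with hgdef
  -- f is decreasing for n ≥ 1
  have hfd : ∀ n, 1 ≤ n → f (n + 1) ≤ f n := by
    intro n hn
    have h2 : (2 : ℝ) ≤ a n := haR n hn
    have hpos : (0 : ℝ) < a (n + 1) := by
      have := haR (n + 1) (by omega); linarith
    have hle : (a (n + 1) : ℝ) ≤ (a n : ℝ) ^ 2 := by
      have h := hrec n hn
      have : (a (n+1) : ℝ) = (a n : ℝ) ^ 2 - a n + 1 := by exact_mod_cast congrArg (Int.cast : ℤ → ℝ) h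
      rw [this]; nlinarith
    have hlog : Real.log (a (n + 1)) ≤ 2 * Real.log (a n) := by
      calc Real.log (a (n + 1)) ≤ Real.log ((a n : ℝ) ^ 2) := by
            apply Real.log_le_log hpos hle
        _ = 2 * Real.log (a n) := by
            rw [Real.log_pow]; push_cast; ring
    calc f (n + 1) = Real.log (a (n + 1)) / 2 ^ (n + 1) := rfl
      _ ≤ (2 * Real.log (a n)) / 2 ^ (n + 1) := by gcongr
      _ = Real.log (a n) / 2 ^ n := by ring
  -- g is increasing for n ≥ 1
  have hgm : ∀ n, 1 ≤ n → g n ≤ g (n + 1) := by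
    intro n hn
    have h2 : (2 : ℝ) ≤ a n := haR n hn
    have hpos : (0 : ℝ) < ((a n : ℝ) - 1) ^ 2 := by nlinarith
    have hle : ((a n : ℝ) - 1) ^ 2 ≤ (a (n + 1) : ℝ) - 1 := by
      have h := hrec n hn
      have : (a (n+1) : ℝ) = (a n : ℝ) ^ 2 - a n + 1 := by exact_mod_cast congrArg (Int.cast : ℤ → ℝ) h
      rw [this]; nlinarith
    have hlog : 2 * Real.log ((a n : ℝ) - 1) ≤ Real.log ((a (n + 1) : ℝ) - 1) := by
      calc 2 * Real.log ((a n : ℝ) - 1) = Real.log (((a n : ℝ) - 1) ^ 2) := by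
            rw [Real.log_pow]; push_cast; ring
        _ ≤ Real.log ((a (n + 1) : ℝ) - 1) := Real.log_le_log hpos hle
    calc g n = Real.log ((a n : ℝ) - 1) / 2 ^ n := rfl
      _ = (2 * Real.log ((a n : ℝ) - 1)) / 2 ^ (n + 1) := by ring
      _ ≤ Real.log ((a (n + 1) : ℝ) - 1) / 2 ^ (n + 1) := by gcongr
  -- g ≤ f for n ≥ 1
  have hgf : ∀ n, 1 ≤ n → g n ≤ f n := by
    intro n hn
    have h2 : (2 : ℝ) ≤ a n := haR n hn
    have : Real.log ((a n : ℝ) - 1) ≤ Real.log (a n) :=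
      Real.log_le_log (by linarith) (by linarith)
    exact div_le_div_of_nonneg_right this (by positivity) |>.trans_eq rfl
  -- g 2 is a lower bound of g n for n ≥ 2
  have hgl : ∀ n, 2 ≤ n → g 2 ≤ g n := by
    intro n hn
    induction n with
    | zero => omega
    | succ k ih =>
      rcases Nat.lt_or_ge k 2 with hk | hk
      · interval_cases k
        · omega
        · exact le_refl _
      · exact (ih hk).trans (hgm k (by omega))
  have hlow : ∀ n, 2 ≤ n → g 2 ≤ f n := fun n hn => (hgl n hn).trans (hgf n (by omega))
  -- convergence
  set F : ℕ → ℝ := fun n => f (n + 2) with hFdef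
  have hanti : Antitone F := antitone_nat_of_succ_le (fun n => hfd (n + 2) (by omega))
  have hbdd : BddBelow (Set.range F) := ⟨g 2, by rintro x ⟨n, rfl⟩; exact hlow (n + 2) (by omega)⟩
  set ℓ : ℝ := ⨅ n, F n with hldef
  have hTF : Tendsto F atTop (nhds ℓ) := tendsto_atTop_ciInf hanti hbdd
  have hℓ : g 2 ≤ ℓ := le_ciInf fun n => hlow (n + 2) (by omega)
  have hfT : Tendsto f atTop (nhds ℓ) := (tendsto_add_atTop_iff_nat 2).mp hTF
  refine ⟨Real.exp ℓ, ?_, ?_, ?_⟩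
  · have hcomp : Tendsto (fun n => Real.exp (f n)) atTop (nhds (Real.exp ℓ)) :=
      (Real.continuous_exp.tendsto ℓ).comp hfT
    refine hcomp.congr' ?_
    filter_upwards [eventually_ge_atTop 1] with n hn
    have hpos : (0 : ℝ) < a n := by have := haR n hn; linarith
    rw [Real.rpow_def_of_pos hpos]
    congr 1
    show Real.log (a n) / 2 ^ n = Real.log (a n) * ((1 : ℝ) / 2 ^ n)
    ring
  all_goals {
    have hX : (2 : ℝ) ≤ (a 1 : ℝ) ^ 2 - a 1 := by
      have := haR 1 le_rfl; nlinarith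
    have hXg : ((a 2 : ℝ) - 1) = (a 1 : ℝ) ^ 2 - a 1 := by
      have h := hrec 1 le_rfl
      have : (a 2 : ℝ) = (a 1 : ℝ) ^ 2 - a 1 + 1 := by exact_mod_cast congrArg (Int.cast : ℤ → ℝ) h
      rw [this]; ring
    have hrw : ((a 1 : ℝ) ^ 2 - a 1) ^ ((1 : ℝ) / 4) = Real.exp (g 2) := by
      rw [Real.rpow_def_of_pos (by linarith)]
      congr 1
      show Real.log ((a 1 : ℝ) ^ 2 - a 1) * (1 / 4) = Real.log ((a 2 : ℝ) - 1) / 2 ^ 2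
      rw [hXg]; ring
    first
    | (rw [hrw]
       have : (0 : ℝ) < g 2 := by
         have : (0 : ℝ) < Real.log ((a 2 : ℝ) - 1) := Real.log_pos (by rw [hXg]; linarith)
         positivity
       calc (1 : ℝ) = Real.exp 0 := (Real.exp_zero).symm
         _ < Real.exp (g 2) := Real.exp_lt_exp.mpr this)
    | (rw [hrw]; exact Real.exp_le_exp.mpr hℓ)
  }
end

section
/- Let a ∈ (0,1), ε > 0, c ∈ (a,1). Let {a_n} be an increasing sequence of reals with a_n ≥ n^(1+ε) for all n and suppose a_k ≥ 2. Then there exist constants B ∈ (0,1) and k₀ such that for all k ≥ k₀, ∑_{n=k}^∞ 2^((log₂ a_n)^c)/a_n ≤ a_k^(−B). -/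
open Real

/-- Let `0 < a < c < 1`, `ε > 0`, and let `a_n` be a strictly increasing sequence of
reals with `a n ≥ n ^ (1+ε)` and `a n ≥ 2`. Then there are `B ∈ (0,1)` and `k₀` such
that for all `k ≥ k₀`, `∑_{n=k}^∞ 2 ^ ((log₂ a_n) ^ c) / a_n ≤ a_k ^ (-B)`. -/
theorem stmt_17 (a c ε : ℝ) (ha0 : 0 < a) (hac : a < c) (hc1 : c < 1) (hε : 0 < ε)
    (A : ℕ → ℝ) (hmono : StrictMono A)
    (hgrow : ∀ n : ℕ, 1 ≤ n → (n : ℝ) ^ (1 + ε) ≤ A n)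
    (h2 : ∀ n : ℕ, 1 ≤ n → 2 ≤ A n) :
    ∃ B : ℝ, 0 < B ∧ B < 1 ∧ ∃ k₀ : ℕ, ∀ k : ℕ, k₀ ≤ k →
      ∑' n : ℕ, (2 : ℝ) ^ (Real.logb 2 (A (k + n)) ^ c) / A (k + n) ≤ A k ^ (-B) := by
  -- parameters
  set δ : ℝ := ε / (4 * (1 + ε)) with hδdef
  have h1ε : (0:ℝ) < 1 + ε := by linarith
  have hδ0 : 0 < δ := by positivity
  have hδlt : δ < 1/4 := by
    rw [hδdef, div_lt_iff₀ (by linarith)]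
    nlinarith
  set s : ℝ := 1 + ε / 2 with hsdef
  have hs1 : 1 < s := by rw [hsdef]; linarith
  -- the threshold for the logarithm
  set L : ℝ := δ ^ (1 / (c - 1)) with hLdef
  have hL0 : 0 < L := rpow_pos_of_pos hδ0 _
  have hLpow : L ^ (c - 1) = δ := by
    rw [hLdef, ← rpow_mul hδ0.le, one_div, inv_mul_cancel₀ (by linarith), rpow_one]
  -- summable comparison series
  have hCsum : Summable (fun n : ℕ => ((n : ℝ) + 1) ^ (-s)) := by
    have h : Summable (fun n : ℕ => ((n : ℝ)) ^ (-s)) :=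
      Real.summable_nat_rpow.mpr (by linarith)
    have := (summable_nat_add_iff 1).mpr h
    simpa using this
  set C : ℝ := ∑' n : ℕ, ((n : ℝ) + 1) ^ (-s) with hCdef
  have hC0 : 0 ≤ C := tsum_nonneg fun n => rpow_nonneg (by positivity) _
  set D : ℝ := max 1 C with hDdef
  have hD1 : (1:ℝ) ≤ D := le_max_left _ _
  have hD0 : 0 < D := lt_of_lt_of_le one_pos hD1
  refine ⟨δ/2, by positivity, by linarith, max (⌈(2:ℝ)^L⌉₊) (⌈D ^ (2/δ)⌉₊) + 1, ?_⟩
  intro k hk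
  have hk1 : 1 ≤ k := le_trans (Nat.le_add_left 1 _) hk
  have hk1' : (1:ℝ) ≤ (k:ℝ) := by exact_mod_cast hk1
  have hkL : (2:ℝ)^L ≤ (k:ℝ) := by
    calc (2:ℝ)^L ≤ (⌈(2:ℝ)^L⌉₊ : ℝ) := Nat.le_ceil _
    _ ≤ (k:ℝ) := by exact_mod_cast le_trans (le_trans (le_max_left _ _) (Nat.le_add_right _ 1)) hk
  have hkD : D ^ (2/δ) ≤ (k:ℝ) := by
    calc D ^ (2/δ) ≤ (⌈D ^ (2/δ)⌉₊ : ℝ) := Nat.le_ceil _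
    _ ≤ (k:ℝ) := by exact_mod_cast le_trans (le_trans (le_max_right _ _) (Nat.le_add_right _ 1)) hk
  -- basic facts about A k
  have hAk2 : 2 ≤ A k := h2 k hk1
  have hAk0 : 0 < A k := by linarith
  have hAk : (k:ℝ) ≤ A k := by
    calc (k:ℝ) = (k:ℝ) ^ (1:ℝ) := (rpow_one _).symm
    _ ≤ (k:ℝ) ^ (1 + ε) := rpow_le_rpow_of_exponent_le hk1' (by linarith)
    _ ≤ A k := hgrow k hk1
  -- per-term bound
  have hterm : ∀ n : ℕ, (2 : ℝ) ^ (Real.logb 2 (A (k + n)) ^ c) / A (k + n) ≤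
      A k ^ (-δ) * ((n : ℝ) + 1) ^ (-s) := by
    intro n
    set t : ℝ := A (k + n) with htdef
    have hm1 : 1 ≤ k + n := le_trans hk1 (Nat.le_add_right _ _)
    have ht2 : 2 ≤ t := h2 _ hm1
    have ht0 : 0 < t := by linarith
    have hAkt : A k ≤ t := hmono.monotone (Nat.le_add_right k n)
    have hmgrow : ((k+n:ℕ):ℝ) ^ (1+ε) ≤ t := hgrow _ hm1
    have hmk : (k:ℝ) ≤ ((k+n:ℕ):ℝ) := by push_cast; linarith [Nat.cast_nonneg (α := ℝ) n]
    have hm1' : (1:ℝ) ≤ ((k+n:ℕ):ℝ) := le_trans hk1' hmk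
    -- log bound
    have hlogL : L ≤ Real.logb 2 t := by
      calc L = Real.logb 2 ((2:ℝ)^L) := (Real.logb_rpow (by norm_num) (by norm_num)).symm
      _ ≤ Real.logb 2 (k:ℝ) := by
          apply Real.logb_le_logb_of_le one_lt_two (rpow_pos_of_pos two_pos _) hkL
      _ ≤ Real.logb 2 t := Real.logb_le_logb_of_le one_lt_two (by linarith) (le_trans hAk hAkt)
    have hlog0 : 0 < Real.logb 2 t := lt_of_lt_of_le hL0 hlogL
    -- (logb 2 t)^c ≤ δ * logb 2 t
    have hkey : Real.logb 2 t ^ c ≤ δ * Real.logb 2 t := by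
      have h1 : Real.logb 2 t ^ c = Real.logb 2 t ^ (c - 1) * Real.logb 2 t := by
        nth_rewrite 1 [show c = (c-1)+1 by ring]
        rw [Real.rpow_add hlog0, Real.rpow_one]
      have h2' : Real.logb 2 t ^ (c - 1) ≤ δ := by
        rw [← hLpow]
        exact Real.rpow_le_rpow_of_nonpos hL0 hlogL (by linarith)
      rw [h1]
      exact mul_le_mul_of_nonneg_right h2' hlog0.le
    -- main chain
    have step1 : (2 : ℝ) ^ (Real.logb 2 t ^ c) ≤ t ^ δ := by
      calc (2 : ℝ) ^ (Real.logb 2 t ^ c) ≤ (2:ℝ) ^ (δ * Real.logb 2 t) :=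
            (Real.rpow_le_rpow_left_iff one_lt_two).mpr hkey
      _ = ((2:ℝ) ^ Real.logb 2 t) ^ δ := by
            rw [mul_comm, Real.rpow_mul (by norm_num)]
      _ = t ^ δ := by rw [Real.rpow_logb two_pos (by norm_num) ht0]
    have step2 : (2 : ℝ) ^ (Real.logb 2 t ^ c) / t ≤ t ^ (δ - 1) := by
      rw [Real.rpow_sub ht0, Real.rpow_one]
      gcongr
    have step3 : t ^ (δ - 1) = t ^ (-δ) * t ^ (2*δ - 1) := by
      rw [← Real.rpow_add ht0]; ring_nf
    have step4 : t ^ (-δ) ≤ A k ^ (-δ) :=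
      Real.rpow_le_rpow_of_nonpos hAk0 hAkt (by linarith)
    have hexp : (1 + ε) * (2*δ - 1) = -s := by
      rw [hδdef, hsdef]; field_simp; ring
    have step5 : t ^ (2*δ - 1) ≤ ((n:ℝ) + 1) ^ (-s) := by
      have hb0 : (0:ℝ) < ((n:ℝ)+1) ^ (1+ε) := by positivity
      have hn1 : ((n:ℝ)+1) ^ (1+ε) ≤ ((k+n:ℕ):ℝ) ^ (1+ε) := by
        apply Real.rpow_le_rpow (by positivity) _ (by linarith)
        push_cast; linarith
      calc t ^ (2*δ - 1) ≤ (((n:ℝ)+1) ^ (1+ε)) ^ (2*δ - 1) := by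
            apply Real.rpow_le_rpow_of_nonpos hb0 (le_trans hn1 hmgrow) (by linarith)
      _ = ((n:ℝ)+1) ^ ((1+ε) * (2*δ-1)) := by rw [← Real.rpow_mul (by positivity)]
      _ = ((n:ℝ)+1) ^ (-s) := by rw [hexp]
    calc (2 : ℝ) ^ (Real.logb 2 t ^ c) / t ≤ t ^ (δ - 1) := step2
    _ = t ^ (-δ) * t ^ (2*δ - 1) := step3
    _ ≤ A k ^ (-δ) * ((n:ℝ)+1) ^ (-s) := by
        apply mul_le_mul step4 step5 (Real.rpow_nonneg ht0.le _) (Real.rpow_nonneg hAk0.le _)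
  -- summability of the dominating series
  have hgsum : Summable (fun n : ℕ => A k ^ (-δ) * ((n : ℝ) + 1) ^ (-s)) := hCsum.mul_left _
  have hfnonneg : ∀ n : ℕ, 0 ≤ (2 : ℝ) ^ (Real.logb 2 (A (k + n)) ^ c) / A (k + n) := by
    intro n
    have : 2 ≤ A (k+n) := h2 _ (le_trans hk1 (Nat.le_add_right _ _))
    positivity
  have hfsum : Summable (fun n : ℕ => (2 : ℝ) ^ (Real.logb 2 (A (k + n)) ^ c) / A (k + n)) :=
    Summable.of_nonneg_of_le hfnonneg hterm hgsum
  calc ∑' n : ℕ, (2 : ℝ) ^ (Real.logb 2 (A (k + n)) ^ c) / A (k + n)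
      ≤ ∑' n : ℕ, A k ^ (-δ) * ((n : ℝ) + 1) ^ (-s) := Summable.tsum_le_tsum hterm hfsum hgsum
    _ = A k ^ (-δ) * C := by rw [tsum_mul_left]
    _ ≤ A k ^ (-δ) * A k ^ (δ/2) := by
        apply mul_le_mul_of_nonneg_left _ (Real.rpow_nonneg hAk0.le _)
        calc C ≤ D := le_max_right _ _
        _ = (D ^ (2/δ)) ^ (δ/2) := by
            rw [← Real.rpow_mul hD0.le,
              show (2/δ)*(δ/2) = 1 by field_simp, Real.rpow_one]
        _ ≤ (k:ℝ) ^ (δ/2) := Real.rpow_le_rpow (by positivity) hkD (by positivity)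
        _ ≤ A k ^ (δ/2) := Real.rpow_le_rpow (by positivity) hAk (by positivity)
    _ = A k ^ (-(δ/2)) := by
        rw [← Real.rpow_add hAk0]; ring_nf
end

section
/- Suppose A_1, A_2 are reals with 1 ≤ A_1 < A_2, and {S_n} is a sequence of reals such that liminf S_n = A_1 and limsup S_n = A_2. Fix δ > 0 small. Then for every s₀ such that max{1, A_1−δ} < S_n < A_2+δ for all n ≥ s₀, there exist s₁ > s₀ with max{1, A_1−δ} < S_{s₁} < A_1+δ, there exists s₂ > s₁ with A_2−δ < S_{s₂} < A_2+δ, and there exists N with s₁ ≤ N < s₂ such that S_{N+1} > (1 + 1/(N+1)²) · max{ max_{s₁≤j≤N} S_j, A_2−2δ }, provided s₁ is sufficiently large. -/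
open Filter Finset Real Topology

/-!
Argue by contradiction. If the jump inequality fails at every `N` in `[s₁, s₂)`, the running
maximum `max (max_{s₁ ≤ j ≤ n} S j) (A₂ - 2δ)` grows by a factor at most `1 + 1/(n+1)²` per step,
so since `1/(n+1)² ≤ 1/n - 1/(n+1)` it stays below `C · exp (1/s₁)` with
`C = max (A₁ + δ) (A₂ - 2δ) < A₂ - δ`. For `s₁` large this is `< A₂ - δ < S s₂`, which is absurd.
-/

lemma one_add_inv_sq_mul_exp_le {x : ℝ} (hx : 0 < x) (a : ℝ) :
    (1 + 1 / (x + 1) ^ 2) * exp (a - 1 / x) ≤ exp (a - 1 / (x + 1)) := by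
  have hsq : 1 / (x + 1) ^ 2 ≤ 1 / x - 1 / (x + 1) := by
    rw [div_sub_div _ _ hx.ne' (by positivity), div_le_div_iff₀ (by positivity) (by positivity)]
    nlinarith
  calc (1 + 1 / (x + 1) ^ 2) * exp (a - 1 / x)
      ≤ exp (1 / (x + 1) ^ 2) * exp (a - 1 / x) := by
        gcongr; linarith [add_one_le_exp (1 / (x + 1) ^ 2)]
    _ = exp (1 / (x + 1) ^ 2 + (a - 1 / x)) := (exp_add _ _).symm
    _ ≤ exp (a - 1 / (x + 1)) := by gcongr; linarith

lemma sup'_Icc_max_le_mul_exp (S : ℕ → ℝ) {L C : ℝ} {s t : ℕ} (hs : 0 < s) (hC : 0 ≤ C)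
    (hinit : max (S s) L ≤ C)
    (hstep : ∀ (n : ℕ) (h : s ≤ n ∧ n < t), S (n + 1) ≤
      (1 + 1 / ((n : ℝ) + 1) ^ 2) * max ((Icc s n).sup' (nonempty_Icc.mpr h.1) S) L) :
    ∀ (n : ℕ) (h : s ≤ n), n ≤ t →
      max ((Icc s n).sup' (nonempty_Icc.mpr h) S) L ≤ C * exp (1 / s - 1 / n) := by
  intro n hn
  induction n, hn using Nat.le_induction with
  | base =>
    intro _
    simpa only [Icc_self, sup'_singleton, sub_self, exp_zero, mul_one] using hinit
  | succ n hn ih =>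
    intro hnt
    have hR := ih (by omega)
    have hn0 : (0 : ℝ) < n := by exact_mod_cast hs.trans_le hn
    have hgrow : C * exp (1 / s - 1 / n) ≤ C * exp (1 / s - 1 / ((n + 1 : ℕ) : ℝ)) := by
      have : 1 / ((n + 1 : ℕ) : ℝ) ≤ 1 / n :=
        one_div_le_one_div_of_le hn0 (by push_cast; linarith)
      gcongr
    have hnext : S (n + 1) ≤ C * exp (1 / s - 1 / ((n + 1 : ℕ) : ℝ)) :=
      calc S (n + 1)
          ≤ (1 + 1 / ((n : ℝ) + 1) ^ 2) * max ((Icc s n).sup' (nonempty_Icc.mpr hn) S) L :=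
            hstep n ⟨hn, hnt⟩
        _ ≤ (1 + 1 / ((n : ℝ) + 1) ^ 2) * (C * exp (1 / s - 1 / n)) := by gcongr
        _ = C * ((1 + 1 / ((n : ℝ) + 1) ^ 2) * exp (1 / s - 1 / n)) := by ring
        _ ≤ C * exp (1 / s - 1 / ((n + 1 : ℕ) : ℝ)) := by
            push_cast; gcongr; exact one_add_inv_sq_mul_exp_le hn0 _
    refine max_le (sup'_le _ _ fun j hj => ?_) ((le_max_right _ _).trans (hR.trans hgrow))
    rcases (mem_Icc.mp hj).2.lt_or_eq with hj' | rfl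
    · exact ((le_sup' S (mem_Icc.mpr ⟨(mem_Icc.mp hj).1, by omega⟩)).trans
        ((le_max_left _ _).trans hR)).trans hgrow
    · exact hnext

theorem stmt_18_general (A₁ A₂ δ : ℝ) (hA₁ : 1 ≤ A₁)
    (hδ0 : 0 < δ) (hδ : δ < (A₂ - A₁) / 2)
    (S : ℕ → ℝ)
    (hinf : liminf S atTop = A₁) (hsup : limsup S atTop = A₂) :
    ∃ M : ℕ, ∀ s₀ : ℕ, M ≤ s₀ →
      (∀ n : ℕ, s₀ ≤ n → max 1 (A₁ - δ) < S n ∧ S n < A₂ + δ) →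
      ∃ s₁ : ℕ, s₀ < s₁ ∧ (max 1 (A₁ - δ) < S s₁ ∧ S s₁ < A₁ + δ) ∧
        ∃ s₂ : ℕ, s₁ < s₂ ∧ (A₂ - δ < S s₂ ∧ S s₂ < A₂ + δ) ∧
          ∃ N : ℕ, ∃ h : s₁ ≤ N ∧ N < s₂,
            S (N + 1) >
              (1 + 1 / ((N : ℝ) + 1) ^ 2) *
                max ((Icc s₁ N).sup' (Finset.nonempty_Icc.mpr h.1) S) (A₂ - 2 * δ) := by
  set C := max (A₁ + δ) (A₂ - 2 * δ)
  have hC : 0 ≤ C := le_max_of_le_left (by linarith)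
  have hlim : Tendsto (fun n : ℕ => C * exp (1 / n)) atTop (𝓝 C) := by
    simpa using (continuous_exp.tendsto 0).comp tendsto_one_div_atTop_nhds_zero_nat |>.const_mul C
  obtain ⟨M, hM⟩ := eventually_atTop.mp
    (hlim.eventually (gt_mem_nhds (max_lt (by linarith) (by linarith) : C < A₂ - δ)))
  refine ⟨M, fun s₀ hs₀ hbd => ?_⟩
  have hbdd_above : IsBoundedUnder (· ≤ ·) atTop S :=
    ⟨A₂ + δ, eventually_atTop.2 ⟨s₀, fun n hn => (hbd n hn).2.le⟩⟩
  have hbdd_below : IsBoundedUnder (· ≥ ·) atTop S :=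
    ⟨1, eventually_atTop.2 ⟨s₀, fun n hn => (le_max_left _ _).trans (hbd n hn).1.le⟩⟩
  obtain ⟨s₁, hs₁, hSs₁⟩ := frequently_atTop'.mp (frequently_lt_of_liminf_lt
    hbdd_above.isCoboundedUnder_ge (by linarith : liminf S atTop < A₁ + δ)) s₀
  obtain ⟨s₂, hs₂, hSs₂⟩ := frequently_atTop'.mp (frequently_lt_of_lt_limsup
    hbdd_below.isCoboundedUnder_le (by linarith : A₂ - δ < limsup S atTop)) s₁
  refine ⟨s₁, hs₁, ⟨(hbd s₁ hs₁.le).1, hSs₁⟩, s₂, hs₂, ⟨hSs₂, (hbd s₂ (by omega)).2⟩, ?_⟩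
  by_contra! hcon
  have hrun := sup'_Icc_max_le_mul_exp S (by omega) hC (max_le_max hSs₁.le le_rfl) hcon
    s₂ hs₂.le le_rfl
  have hdecay : C * exp (1 / s₁ - 1 / s₂) ≤ C * exp (1 / s₁) := by
    gcongr; exact sub_le_self _ (by positivity)
  have hSs₂_le : S s₂ ≤ max ((Icc s₁ s₂).sup' (nonempty_Icc.mpr hs₂.le) S) (A₂ - 2 * δ) :=
    (le_sup' S (right_mem_Icc.mpr hs₂.le)).trans (le_max_left _ _)
  linarith [hM s₁ (by omega)]

/-- If `liminf S = A₁` and `limsup S = A₂` with `1 ≤ A₁ < A₂` and `δ > 0` is small,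
then for every sufficiently large `s₀` with `max 1 (A₁-δ) < S n < A₂+δ` for all
`n ≥ s₀`, there exist `s₁ > s₀` with `max 1 (A₁-δ) < S s₁ < A₁+δ`, `s₂ > s₁` with
`A₂-δ < S s₂ < A₂+δ`, and `N` with `s₁ ≤ N < s₂` such that
`S (N+1) > (1 + 1/(N+1)²) * max (max_{s₁ ≤ j ≤ N} S j) (A₂ - 2δ)`. -/
theorem stmt_18 (A₁ A₂ δ : ℝ) (hA₁ : 1 ≤ A₁) (hA : A₁ < A₂)
    (hδ0 : 0 < δ) (hδ : δ < (A₂ - A₁) / 2)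
    (S : ℕ → ℝ)
    (hinf : liminf S atTop = A₁) (hsup : limsup S atTop = A₂) :
    ∃ M : ℕ, ∀ s₀ : ℕ, M ≤ s₀ →
      (∀ n : ℕ, s₀ ≤ n → max 1 (A₁ - δ) < S n ∧ S n < A₂ + δ) →
      ∃ s₁ : ℕ, s₀ < s₁ ∧ (max 1 (A₁ - δ) < S s₁ ∧ S s₁ < A₁ + δ) ∧
        ∃ s₂ : ℕ, s₁ < s₂ ∧ (A₂ - δ < S s₂ ∧ S s₂ < A₂ + δ) ∧
          ∃ N : ℕ, ∃ h : s₁ ≤ N ∧ N < s₂,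
            S (N + 1) >
              (1 + 1 / ((N : ℝ) + 1) ^ 2) *
                max ((Icc s₁ N).sup' (Finset.nonempty_Icc.mpr h.1) S) (A₂ - 2 * δ) :=
  stmt_18_general A₁ A₂ δ hA₁ hδ0 hδ S hinf hsup
end
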